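/- With k = κ(n) = max{1, ⌈log₂ n − 2log₂log₂ n⌉}, the graph Z*_n = Z_{n,κ(n)} has diameter at most (1 + (2log₂log₂ n + 1)/(log₂ n − 2log₂log₂ n − 1) + 1/log₂ n) · n/log₂ n, which is (1+o(1)) n/log₂ n. -/

import Mathlib

open SimpleGraph

/-- `κ(n)`: `0` for `n ≤ 1`, and `max{1, ⌈log₂ n − 2 log₂ log₂ n⌉}` for `n ≥ 2`. -/
noncomputable def kappa (n : ℕ) : ℕ :=
  if n ≤ 1 then 0
  else max 1 (Int.toNat ⌈Real.logb 2 (n : ℝ) - 2 * Real.logb 2 (Real.logb 2 (n : ℝ))⌉)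

/-- XOR the first `k` bits with the last `k` bits of a binary string of length `n`. -/
def phiAux (n k : ℕ) (x : Fin n → ZMod 2) : Fin n → ZMod 2 :=
  fun i => if h : i.val < k ∧ n - k + i.val < n then x i + x ⟨n - k + i.val, h.2⟩ else x i

/-- The permutation `φ` on `Z₂ⁿ`. -/
noncomputable def phi (n : ℕ) : (Fin n → ZMod 2) → (Fin n → ZMod 2) := phiAux n (kappa n)

/-- The Z-cube `H_n`, a graph on the binary strings of length `n`.  Bit `0` is the
"first" bit; `Fin.tail x` is the string `x` with its first bit removed. -/
noncomputable def Zcube : (n : ℕ) → SimpleGraph (Fin n → ZMod 2)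
  | 0 => ⊥
  | (n + 1) =>
    { Adj := fun x y =>
        (x 0 = y 0 ∧ (Zcube n).Adj (Fin.tail x) (Fin.tail y)) ∨
        (x 0 ≠ y 0 ∧ (Fin.tail y = phi n (Fin.tail x) ∨ Fin.tail x = phi n (Fin.tail y))),
      symm := by
        constructor
        rintro x y (⟨h1, h2⟩ | ⟨h1, h2⟩)
        · exact Or.inl ⟨h1.symm, (Zcube n).adj_symm h2⟩
        · exact Or.inr ⟨h1.symm, h2.symm⟩
      loopless := by
        constructor
        rintro x (⟨h1, h2⟩ | ⟨h1, h2⟩)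
        · exact (Zcube n).loopless.irrefl _ h2
        · exact h1 rfl }
/-- `σ_n = Σ_{j ∈ S(n)} j / κ(j)²`, where `S(n) = {j ≤ n : κ(j) = κ(j−1)+1}`. -/
noncomputable def sigmaZ (n : ℕ) : ℝ :=
  ∑ j ∈ (Finset.range (n + 1)).filter (fun j => kappa j = kappa (j - 1) + 1),
    (j : ℝ) / (kappa j : ℝ) ^ 2

/-- The last `k` bits of a binary string of length `n` (for `k ≤ n`). -/
def lastBits (k n : ℕ) (v : Fin n → ZMod 2) : Fin k → ZMod 2 :=
  fun i => if h : n - k + i.val < n then v ⟨n - k + i.val, h⟩ else 0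

/-- A walk in `H_n` is `k`-robust if every binary string of length `k` occurs as the
last `k` bits of some vertex of the walk. -/
def IsRobustWalk (k : ℕ) {n : ℕ} {x y : Fin n → ZMod 2} (W : (Zcube n).Walk x y) : Prop :=
  ∀ z : Fin k → ZMod 2, ∃ v ∈ W.support, lastBits k n v = z

/-- The permutation `φ_k` on `Z₂ⁿ`. -/
def phiK (k n : ℕ) (x : Fin n → ZMod 2) : Fin n → ZMod 2 :=
  if n ≤ k then x
  else if n ≤ 2 * k then
    fun i => if h : i.val < n - k ∧ k + i.val < n then x i + x ⟨k + i.val, h.2⟩ else x i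
  else
    fun i => if h : i.val < k ∧ n - k + i.val < n then x i + x ⟨n - k + i.val, h.2⟩ else x i

/-- The Z-cube `Z_{n,k}`. -/
def ZcubeK (k : ℕ) : (n : ℕ) → SimpleGraph (Fin n → ZMod 2)
  | 0 => ⊥
  | (n + 1) =>
    { Adj := fun x y =>
        (x 0 = y 0 ∧ (ZcubeK k n).Adj (Fin.tail x) (Fin.tail y)) ∨
        (x 0 ≠ y 0 ∧ (Fin.tail y = phiK k n (Fin.tail x) ∨ Fin.tail x = phiK k n (Fin.tail y))),
      symm := by
        constructor
        rintro x y (⟨h1, h2⟩ | ⟨h1, h2⟩)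
        · exact Or.inl ⟨h1.symm, (ZcubeK k n).adj_symm h2⟩
        · exact Or.inr ⟨h1.symm, h2.symm⟩
      loopless := by
        constructor
        rintro x (⟨h1, h2⟩ | ⟨h1, h2⟩)
        · exact (ZcubeK k n).loopless.irrefl _ h2
        · exact h1 rfl }

/-- The subgraph of `H_n` consisting of the cross edges, i.e. the edges between the
two copies `0H_{n−1}` and `1H_{n−1}` (edges whose endpoints differ in the first bit). -/
noncomputable def crossSubgraph (n : ℕ) : (Zcube n).Subgraph where
  verts := Set.univ
  Adj x y := ∃ h : 0 < n, (Zcube n).Adj x y ∧ x ⟨0, h⟩ ≠ y ⟨0, h⟩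
  adj_sub := by rintro x y ⟨h, h1, h2⟩; exact h1
  edge_vert := by intro x y _; trivial
  symm := by constructor; rintro x y ⟨h, h1, h2⟩; exact ⟨h, h1.symm, h2.symm⟩

/-- A graph is Hamiltonian connected if any two distinct vertices are joined by a
Hamiltonian path. -/
def HamiltonianConnected {V : Type*} [DecidableEq V] (G : SimpleGraph V) : Prop :=
  ∀ x y : V, x ≠ y → ∃ p : G.Walk x y, p.IsHamiltonian

/-- The graph obtained from two disjoint copies of `G` by adding the perfect matching
`(u, false) ∼ (ψ u, true)` given by a bijection `ψ`. -/
def matchingJoin {V : Type*} (G : SimpleGraph V) (ψ : V ≃ V) : SimpleGraph (V × Bool) where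
  Adj a b := (a.2 = b.2 ∧ G.Adj a.1 b.1) ∨
    (a.2 = false ∧ b.2 = true ∧ b.1 = ψ a.1) ∨
    (a.2 = true ∧ b.2 = false ∧ a.1 = ψ b.1)
  symm := by
    constructor
    rintro ⟨u, i⟩ ⟨v, j⟩ (⟨h1, h2⟩ | ⟨h1, h2, h3⟩ | ⟨h1, h2, h3⟩)
    · exact Or.inl ⟨h1.symm, h2.symm⟩
    · exact Or.inr (Or.inr ⟨h2, h1, h3⟩)
    · exact Or.inr (Or.inl ⟨h2, h1, h3⟩)
  loopless := by
    constructor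
    rintro ⟨u, i⟩ (⟨h1, h2⟩ | ⟨h1, h2, h3⟩ | ⟨h1, h2, h3⟩)
    · exact G.loopless.irrefl _ h2
    · simp_all
    · simp_all

/-!
Crossing the matching edge at level `d` of `Z_{n,k}` flips bit `d` and, when at least `2k` bits
follow it, adds the last `k` bits to bits `d + 1, …, d + k`. To join `x` to `y`, cover the
positions below `n - 2k` where they differ greedily by disjoint windows `[p, p + k]` (at most
`n / (k + 1)` of them) and let the last `k` bits run through all `2 ^ k` patterns with `2 ^ k - 1`
flips: whenever they read the pattern of `x + y` just after `p`, one crossing at `p` corrects the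
whole window. The last `2k` bits are then fixed one at a time, so
`diam Z_{n,k} ≤ n / (k + 1) + 2 ^ k + 2k`. For `k = κ(n) = ⌈c⌉`, `c = log₂ n - 2 log₂ log₂ n`,
we get `2 ^ k < 2 · 2 ^ c = 2n / (log₂ n)²`, which gives the explicit bound; it is
`(1 + o(1)) n / log₂ n` because `log₂ log₂ n = o(log₂ n)`.
-/

open Real Filter Topology

lemma ZMod.eq_add_one_of_ne {a b : ZMod 2} (h : a ≠ b) : a = b + 1 := by
  revert a b
  decide

namespace Finset

/-- Greedy: the least uncovered element of `S` starts the next interval `[p, p + k]`. -/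
theorem exists_sparse_cover (k : ℕ) (S : Finset ℕ) :
    ∃ P ⊆ S, (∀ a ∈ P, ∀ b ∈ P, a < b → a + k < b) ∧ ∀ s ∈ S, ∃ p ∈ P, p ≤ s ∧ s ≤ p + k := by
  induction S using strongInduction with
  | H S ih =>
    rcases S.eq_empty_or_nonempty with rfl | hS
    · exact ⟨∅, by simp⟩
    set m := S.min' hS
    have hmin : ∀ s ∈ S, m ≤ s := fun s hs => S.min'_le s hs
    obtain ⟨P, hPT, hsparse, hcover⟩ := ih (S.filter (m + k < ·))
      (filter_ssubset.mpr ⟨m, S.min'_mem hS, by omega⟩)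
    have hPS : P ⊆ S := hPT.trans (filter_subset _ _)
    have hPm : ∀ b ∈ P, m + k < b := fun b hb => (mem_filter.mp (hPT hb)).2
    refine ⟨insert m P, insert_subset (S.min'_mem hS) hPS, ?_, fun s hs => ?_⟩
    · simp only [mem_insert]
      rintro a (rfl | ha) b (rfl | hb) hab
      · omega
      · exact hPm b hb
      · have := hmin a (hPS ha); omega
      · exact hsparse a ha b hb hab
    · by_cases hsm : s ≤ m + k
      · exact ⟨m, mem_insert_self m P, hmin s hs, hsm⟩
      · obtain ⟨p, hp, hps⟩ := hcover s (mem_filter.mpr ⟨hs, by omega⟩)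
        exact ⟨p, mem_insert_of_mem hp, hps⟩

/-- The intervals `[p, p + k]`, `p ∈ P`, are disjoint and lie in `[0, N + k)`. -/
theorem card_mul_le_of_sparse {k N : ℕ} {P : Finset ℕ} (hP : P ⊆ range N)
    (hsparse : ∀ a ∈ P, ∀ b ∈ P, a < b → a + k < b) : (k + 1) * P.card ≤ N + k := by
  have hdisj : (P : Set ℕ).PairwiseDisjoint fun p => Ico p (p + k + 1) := by
    intro a ha b hb hab
    simp only [Function.onFun, disjoint_left, mem_Ico]
    intro i hia hib
    rcases hab.lt_or_gt with h | h
    · have := hsparse a ha b hb h; omega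
    · have := hsparse b hb a ha h; omega
  calc (k + 1) * P.card = (P.biUnion fun p => Ico p (p + k + 1)).card := by
        rw [card_biUnion hdisj]; simp [add_assoc, mul_comm]
    _ ≤ (range (N + k)).card := card_le_card fun i hi => by
        simp only [mem_biUnion, mem_Ico] at hi
        obtain ⟨p, hp, hpi⟩ := hi
        have := mem_range.mp (hP hp)
        exact mem_range.mpr (by omega)
    _ = N + k := card_range _

end Finset

lemma Nat.four_mul_le_two_pow {k : ℕ} (hk : 4 ≤ k) : 4 * k ≤ 2 ^ k := by
  obtain ⟨j, rfl⟩ := Nat.exists_eq_add_of_le' hk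
  have := Nat.lt_two_pow_self (n := j)
  rw [pow_add]
  omega

lemma Real.two_rpow_logb_sub_two_mul_logb {x y : ℝ} (hx : 0 < x) (hy : 0 < y) :
    (2 : ℝ) ^ (logb 2 x - 2 * logb 2 y) = x / y ^ 2 := by
  rw [rpow_sub two_pos, rpow_logb two_pos (by norm_num) hx, mul_comm, rpow_mul zero_le_two,
    rpow_logb two_pos (by norm_num) hy, rpow_two]

/-- With `2 ^ c = N / L ^ 2`: the term `N / (k + 1)` undercuts `N / (c - 1)` by at least
`2 N / L ^ 2`, and `2 ^ k + 2 k ≤ 3 · 2 ^ c` once `k ≥ 4`; `k = 3` is checked by hand. -/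
lemma div_add_two_pow_add_le {N L c : ℝ} {k : ℕ} (hc : 2 < c) (hck : c ≤ k)
    (hkc : (k : ℝ) < c + 1) (hcL : c + 2 ≤ L) (hN : (2 : ℝ) ^ c = N / L ^ 2) :
    N / (k + 1) + 2 ^ k + 2 * k ≤ N / (c - 1) + N / L ^ 2 := by
  have hL : 0 < L := by linarith
  have hNpos : 0 < N := by
    have := rpow_pos_of_pos two_pos c
    rw [hN] at this
    exact (div_pos_iff_of_pos_right (by positivity)).mp this
  have hgap : N / (k + 1) + 2 * (N / L ^ 2) ≤ N / (c - 1) := by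
    have hc1 : 0 < c - 1 := by linarith
    have hk1 : (0 : ℝ) < k + 1 := by positivity
    have hprod : (c - 1) * (k + 1) ≤ L ^ 2 := by nlinarith
    have hsplit : N / (c - 1) = N / (k + 1) + 2 * N / ((c - 1) * (k + 1)) +
        N * (k - c) / ((c - 1) * (k + 1)) := by
      field_simp
      ring
    have : 2 * (N / L ^ 2) ≤ 2 * N / ((c - 1) * (k + 1)) := by
      rw [mul_div_assoc']
      exact div_le_div_of_nonneg_left (by positivity) (by positivity) hprod
    have : 0 ≤ N * (k - c) / ((c - 1) * (k + 1)) :=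
      div_nonneg (mul_nonneg hNpos.le (by linarith)) (by positivity)
    linarith
  have hNL : 0 ≤ N / L ^ 2 := by positivity
  rcases (show k = 3 ∨ 4 ≤ k by
      have : (2 : ℝ) < k := by linarith
      have : 2 < k := by exact_mod_cast this
      omega) with rfl | hk
  · have hN64 : 64 ≤ N := by
      have h4 : (4 : ℝ) ≤ 2 ^ c := by
        calc (4 : ℝ) = 2 ^ (2 : ℝ) := by norm_num
          _ ≤ 2 ^ c := rpow_le_rpow_of_exponent_le one_le_two hc.le
      rw [hN, le_div_iff₀ (by positivity)] at h4
      nlinarith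
    have : N / 2 ≤ N / (c - 1) :=
      div_le_div_of_nonneg_left hNpos.le (by linarith) (by push_cast at hck; linarith)
    push_cast
    linarith
  · have h4k : (4 * k : ℝ) ≤ 2 ^ k := by exact_mod_cast Nat.four_mul_le_two_pow hk
    have hpow : (2 : ℝ) ^ k ≤ 2 * 2 ^ c := by
      have := rpow_le_rpow_of_exponent_le one_le_two (show (k : ℝ) - 1 ≤ c by linarith)
      rw [rpow_sub_one two_ne_zero, rpow_natCast] at this
      linarith
    linarith

lemma tendsto_logb_natCast_atTop : Tendsto (fun n : ℕ => logb 2 (n : ℝ)) atTop atTop :=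
  (tendsto_logb_atTop one_lt_two).comp tendsto_natCast_atTop_atTop

lemma tendsto_logb_div_self_atTop : Tendsto (fun t : ℝ => logb 2 t / t) atTop (𝓝 0) := by
  have := isLittleO_log_id_atTop.tendsto_div_nhds_zero.div_const (log 2)
  rw [zero_div] at this
  refine this.congr fun t => ?_
  simp only [logb, id]
  ring

namespace ZcubeK

lemma phiK_apply (k m : ℕ) (t : Fin m → ZMod 2) (j : Fin m) :
    phiK k m t j =
      if h : (j : ℕ) < min k (m - k) then t j + t ⟨j + max k (m - k), by omega⟩ else t j := by
  unfold phiK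
  split_ifs <;> (try beta_reduce) <;> (try split_ifs) <;>
    first | rfl | omega | (congr 1; exact congrArg t (Fin.ext (by simp only; omega)))

/-- The neighbour of `x` across the matching edge at level `d`: bit `d` is flipped and `φ_k`
is applied to the bits after it. -/
def crossNeighbor (k n d : ℕ) (x : Fin n → ZMod 2) : Fin n → ZMod 2 := fun i =>
  if (i : ℕ) = d then x i + 1
  else if h : d < i ∧ (i : ℕ) ≤ d + min k (n - d - 1 - k) then
    x i + x ⟨i + max k (n - d - 1 - k), by omega⟩
  else x i

variable {k n d : ℕ}

lemma tail_crossNeighbor_zero (x : Fin (n + 1) → ZMod 2) :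
    Fin.tail (crossNeighbor k (n + 1) 0 x) = phiK k n (Fin.tail x) := by
  funext j
  simp only [Fin.tail, crossNeighbor, phiK_apply, Fin.val_succ]
  split_ifs <;> first | rfl | omega | contradiction |
    (congr 1; exact congrArg x (Fin.ext (by simp only [Fin.val_succ]; omega)))

lemma tail_crossNeighbor_succ (x : Fin (n + 1) → ZMod 2) :
    Fin.tail (crossNeighbor k (n + 1) (d + 1) x) = crossNeighbor k n d (Fin.tail x) := by
  funext j
  simp only [Fin.tail, crossNeighbor, Fin.val_succ]
  split_ifs <;> first | rfl | omega | contradiction |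
    (congr 1; exact congrArg x (Fin.ext (by simp only [Fin.val_succ]; omega)))

theorem adj_crossNeighbor (hd : d < n) (x : Fin n → ZMod 2) :
    (ZcubeK k n).Adj x (crossNeighbor k n d x) := by
  induction n generalizing d with
  | zero => omega
  | succ n ih =>
    cases d with
    | zero =>
      refine Or.inr ⟨?_, Or.inl (tail_crossNeighbor_zero x)⟩
      simp [crossNeighbor]
    | succ d =>
      refine Or.inl ⟨by simp [crossNeighbor], ?_⟩
      rw [tail_crossNeighbor_succ]
      exact ih (by omega) _

lemma edist_crossNeighbor_le_one (hd : d < n) (x : Fin n → ZMod 2) :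
    (ZcubeK k n).edist x (crossNeighbor k n d x) ≤ 1 :=
  (edist_eq_one_iff_adj.mpr (adj_crossNeighbor hd x)).le

lemma crossNeighbor_apply_of_lt {x : Fin n → ZMod 2} {i : Fin n} (hi : (i : ℕ) < d) :
    crossNeighbor k n d x i = x i := by
  simp only [crossNeighbor]
  split_ifs <;> first | rfl | omega

lemma crossNeighbor_apply_self {x : Fin n → ZMod 2} {i : Fin n} (hi : (i : ℕ) = d) :
    crossNeighbor k n d x i = x i + 1 := by
  simp [crossNeighbor, hi]

lemma crossNeighbor_apply_of_gt {x : Fin n → ZMod 2} {i : Fin n} (hd : n ≤ d + k + 1)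
    (hi : d < i) : crossNeighbor k n d x i = x i := by
  simp only [crossNeighbor]
  split_ifs <;> first | rfl | omega

theorem edist_le_of_eq_of_lt (N : ℕ) (x y : Fin n → ZMod 2)
    (h : ∀ i : Fin n, (i : ℕ) < N → x i = y i) : (ZcubeK k n).edist x y ≤ (n - N : ℕ) := by
  induction hm : n - N generalizing N x with
  | zero =>
    obtain rfl : x = y := funext fun i => h i (by omega)
    simp
  | succ m ih =>
    have hN : N < n := by omega
    obtain ⟨x', hxx', hx'⟩ : ∃ x', (ZcubeK k n).edist x x' ≤ 1 ∧
        ∀ i : Fin n, (i : ℕ) < N + 1 → x' i = y i := by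
      by_cases hxN : x ⟨N, hN⟩ = y ⟨N, hN⟩
      · refine ⟨x, by simp, fun i hi => ?_⟩
        rcases Nat.lt_succ_iff_lt_or_eq.mp hi with hi | hi
        · exact h i hi
        · rwa [show i = ⟨N, hN⟩ from Fin.ext hi]
      · refine ⟨crossNeighbor k n N x, edist_crossNeighbor_le_one hN x, fun i hi => ?_⟩
        rcases Nat.lt_succ_iff_lt_or_eq.mp hi with hi | hi
        · rw [crossNeighbor_apply_of_lt hi, h i hi]
        · rw [crossNeighbor_apply_self hi, show i = ⟨N, hN⟩ from Fin.ext hi]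
          exact (ZMod.eq_add_one_of_ne (Ne.symm hxN)).symm
    calc (ZcubeK k n).edist x y ≤ (ZcubeK k n).edist x x' + (ZcubeK k n).edist x' y :=
          SimpleGraph.edist_triangle
      _ ≤ 1 + (m : ℕ) := add_le_add hxx' (ih (N + 1) x' hx' (by omega))
      _ = (m + 1 : ℕ) := by push_cast; ring

lemma lastBits_add (x y : Fin n → ZMod 2) :
    lastBits k n (x + y) = lastBits k n x + lastBits k n y := by
  funext i
  simp only [lastBits, Pi.add_apply]
  split_ifs <;> simp

def window (n d : ℕ) (v : Fin k → ZMod 2) : Fin n → ZMod 2 := fun i =>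
  if (i : ℕ) = d then 1 else if h : d < i ∧ (i : ℕ) ≤ d + k then v ⟨i - d - 1, by omega⟩ else 0

lemma window_apply_of_not_mem {v : Fin k → ZMod 2} {i : Fin n} (hi : ¬(d ≤ i ∧ (i : ℕ) ≤ d + k)) :
    window n d v i = 0 := by
  simp only [window]
  split_ifs <;> first | rfl | omega

lemma lastBits_window (hd : d + 2 * k < n) (v : Fin k → ZMod 2) :
    lastBits k n (window n d v) = 0 := by
  funext i
  simp only [lastBits]
  split_ifs with h
  · exact window_apply_of_not_mem (by simp only; omega)
  · rfl

lemma crossNeighbor_eq_add_window (hd : d + 2 * k < n) (x : Fin n → ZMod 2) :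
    crossNeighbor k n d x = x + window n d (lastBits k n x) := by
  funext i
  simp only [crossNeighbor, window, lastBits, Pi.add_apply]
  split_ifs <;> first | rfl | omega |
    (congr 1; exact congrArg x (Fin.ext (by simp only; omega))) | simp

lemma lastBits_crossNeighbor (hk : k ≤ n) (c : Fin k) (x : Fin n → ZMod 2) :
    lastBits k n (crossNeighbor k n (n - k + c) x) = lastBits k n x + Pi.single c 1 := by
  funext i
  simp only [lastBits, Pi.add_apply, Pi.single_apply, dif_pos (show n - k + i < n by omega)]
  rcases lt_trichotomy i c with h | rfl | h
  · rw [crossNeighbor_apply_of_lt (by simp only; omega), if_neg h.ne, add_zero]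
  · rw [crossNeighbor_apply_self (by simp only), if_pos rfl]
  · rw [crossNeighbor_apply_of_gt (by omega) (by simp only; omega), if_neg h.ne', add_zero]

variable (M : ℕ → Fin k → ZMod 2)

/-- Windows below `n - 2k` leave the last `k` bits alone, so all windows with the current
pattern of the last `k` bits can be applied one after another. -/
theorem edist_add_sum_window_le (P : Finset ℕ) (x : Fin n → ZMod 2) (hP : ∀ p ∈ P, p + 2 * k < n)
    (hM : ∀ p ∈ P, M p = lastBits k n x) :
    (ZcubeK k n).edist x (x + ∑ p ∈ P, window n p (M p)) ≤ P.card := by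
  induction P using Finset.induction_on generalizing x with
  | empty => simp
  | insert a P ha ih =>
    set z := x + window n a (M a)
    have hz : crossNeighbor k n a x = z := by
      rw [crossNeighbor_eq_add_window (hP a (by simp)), ← hM a (by simp)]
    have hlast : lastBits k n z = lastBits k n x := by
      rw [lastBits_add, lastBits_window (hP a (by simp)), add_zero]
    calc (ZcubeK k n).edist x (x + ∑ p ∈ insert a P, window n p (M p))
        ≤ (ZcubeK k n).edist x z + (ZcubeK k n).edist z (z + ∑ p ∈ P, window n p (M p)) := by
          rw [Finset.sum_insert ha, ← add_assoc]
          exact SimpleGraph.edist_triangle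
      _ ≤ 1 + P.card := by
          have ha : a < n := by have := hP a (by simp); omega
          refine add_le_add (hz ▸ edist_crossNeighbor_le_one ha x) ?_
          exact ih z (fun p hp => hP p (by simp [hp])) fun p hp => by
            rw [hlast, hM p (by simp [hp])]
      _ = (insert a P).card := by rw [Finset.card_insert_of_notMem ha]; push_cast; ring

/-- Gray-code recursion: to free bit `c` as well, sweep through `F` for the windows whose pattern
agrees with the current bit `c`, flip bit `c`, and sweep through `F` again for the others. -/
theorem exists_sweep (hk : k ≤ n) (F : Finset (Fin k)) (P : Finset ℕ) (x : Fin n → ZMod 2)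
    (hP : ∀ p ∈ P, p + 2 * k < n) (hM : ∀ p ∈ P, ∀ i ∉ F, M p i = lastBits k n x i) :
    ∃ x', (∀ j : Fin n, (j : ℕ) < n - k → x' j = x j + ∑ p ∈ P, window n p (M p) j) ∧
      (∀ i ∉ F, lastBits k n x' i = lastBits k n x i) ∧
      (ZcubeK k n).edist x x' ≤ (P.card + (2 ^ F.card - 1) : ℕ) := by
  induction F using Finset.induction_on generalizing P x with
  | empty =>
    refine ⟨x + ∑ p ∈ P, window n p (M p), fun j _ => by simp [Finset.sum_apply],
      fun i _ => ?_, by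
        simpa using edist_add_sum_window_le M P x hP fun p hp => funext (hM p hp · (by simp))⟩
    simp only [lastBits, Pi.add_apply, Finset.sum_apply]
    split_ifs with h
    · rw [Finset.sum_eq_zero fun p hp =>
        window_apply_of_not_mem (by have := hP p hp; simp only; omega), add_zero]
    · rfl
  | insert c F hc ih =>
    classical
    set P₀ := P.filter fun p => M p c = lastBits k n x c
    set P₁ := P.filter fun p => ¬M p c = lastBits k n x c
    obtain ⟨x₁, h₁low, h₁last, h₁⟩ := ih P₀ x (fun p hp => hP p (Finset.mem_filter.mp hp).1)
      fun p hp i hi => by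
        by_cases hic : i = c
        · exact hic ▸ (Finset.mem_filter.mp hp).2
        · exact hM p (Finset.mem_filter.mp hp).1 i (by simp [hic, hi])
    set x₂ := crossNeighbor k n (n - k + c) x₁ with hx₂
    have h₂last := lastBits_crossNeighbor hk c x₁
    obtain ⟨x₃, h₃low, h₃last, h₃⟩ := ih P₁ x₂ (fun p hp => hP p (Finset.mem_filter.mp hp).1)
      fun p hp i hi => by
        rw [h₂last, Pi.add_apply, h₁last i hi, Pi.single_apply]
        by_cases hic : i = c
        · subst hic
          rw [if_pos rfl]
          exact ZMod.eq_add_one_of_ne (Finset.mem_filter.mp hp).2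
        · rw [if_neg hic, add_zero]
          exact hM p (Finset.mem_filter.mp hp).1 i (by simp [hic, hi])
    refine ⟨x₃, fun j hj => ?_, fun i hi => ?_, ?_⟩
    · rw [h₃low j hj, hx₂, crossNeighbor_apply_of_lt (by omega), h₁low j hj, add_assoc,
        Finset.sum_filter_add_sum_filter_not]
    · have hic : i ≠ c := fun h => hi (h ▸ Finset.mem_insert_self c F)
      have hiF : i ∉ F := fun h => hi (Finset.mem_insert_of_mem h)
      rw [h₃last i hiF, h₂last, Pi.add_apply, h₁last i hiF, Pi.single_eq_of_ne hic, add_zero]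
    · have hcard : P₀.card + P₁.card = P.card := Finset.card_filter_add_card_filter_not _
      have hpow : 1 ≤ 2 ^ F.card := Nat.one_le_two_pow
      calc (ZcubeK k n).edist x x₃
          ≤ (ZcubeK k n).edist x x₁ + (ZcubeK k n).edist x₁ x₂ + (ZcubeK k n).edist x₂ x₃ :=
            SimpleGraph.edist_triangle.trans (add_le_add SimpleGraph.edist_triangle le_rfl)
        _ ≤ (P₀.card + (2 ^ F.card - 1) : ℕ) + 1 + (P₁.card + (2 ^ F.card - 1) : ℕ) :=
            add_le_add (add_le_add h₁ (edist_crossNeighbor_le_one (by omega) x₁)) h₃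
        _ = (P.card + (2 ^ (insert c F).card - 1) : ℕ) := by
            rw [Finset.card_insert_of_notMem hc, pow_succ]
            norm_cast
            omega

lemma window_apply_eq_of_shift (D : ℕ → ZMod 2) (hp : D d = 1) {j : Fin n}
    (hj : d ≤ j ∧ (j : ℕ) ≤ d + k) : window n d (fun i : Fin k => D (d + 1 + i)) j = D j := by
  simp only [window]
  split_ifs with h₁ h₂
  · rw [h₁, hp]
  · congr 1; omega
  · omega

theorem edist_le (x y : Fin n → ZMod 2) :
    (ZcubeK k n).edist x y ≤ (n / (k + 1) + (2 ^ k - 1) + 2 * k : ℕ) := by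
  rcases lt_or_ge n k with hnk | hk
  · have := Nat.zero_le (n / (k + 1))
    exact (edist_le_of_eq_of_lt 0 x y (by simp)).trans (Nat.cast_le.mpr (by omega))
  classical
  set D : ℕ → ZMod 2 := fun j => if h : j < n then x ⟨j, h⟩ + y ⟨j, h⟩ else 0
  obtain ⟨P, hPS, hsparse, hcover⟩ :=
    Finset.exists_sparse_cover k ((Finset.range (n - 2 * k)).filter (D · ≠ 0))
  have hPrange : P ⊆ Finset.range (n - 2 * k) := hPS.trans (Finset.filter_subset _ _)
  have hPD : ∀ p ∈ P, D p = 1 := fun p hp => by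
    simpa using ZMod.eq_add_one_of_ne (Finset.mem_filter.mp (hPS hp)).2
  obtain ⟨x', hx'low, -, hxx'⟩ := exists_sweep (fun p i => D (p + 1 + i)) hk Finset.univ P x
    (fun p hp => by have := Finset.mem_range.mp (hPrange hp); omega) (by simp)
  have hwindow : ∀ j : Fin n, (j : ℕ) < n - 2 * k →
      ∑ p ∈ P, window n p (fun i : Fin k => D (p + 1 + i)) j = D j := by
    intro j hj
    by_cases hcov : ∃ p ∈ P, p ≤ j ∧ (j : ℕ) ≤ p + k
    · obtain ⟨p, hp, hpj⟩ := hcov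
      rw [Finset.sum_eq_single_of_mem p hp fun q hq hqp => window_apply_of_not_mem ?_]
      · exact window_apply_eq_of_shift D (hPD p hp) hpj
      · rcases hqp.lt_or_gt with h | h
        · have := hsparse q hq p hp h; omega
        · have := hsparse p hp q hq h; omega
    · push Not at hcov
      rw [Finset.sum_eq_zero fun p hp =>
        window_apply_of_not_mem fun h => (hcov p hp h.1).not_ge h.2]
      by_contra hDj
      obtain ⟨p, hp, h₁, h₂⟩ :=
        hcover j (Finset.mem_filter.mpr ⟨Finset.mem_range.mpr hj, Ne.symm hDj⟩)
      exact (hcov p hp h₁).not_ge h₂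
  have hx'y : ∀ j : Fin n, (j : ℕ) < n - 2 * k → x' j = y j := fun j hj => by
    rw [hx'low j (by omega), hwindow j hj, show D j = x j + y j from dif_pos j.isLt]
    exact CharTwo.add_cancel_left _ _
  have hcard : P.card ≤ n / (k + 1) := by
    have := Finset.card_mul_le_of_sparse hPrange hsparse
    rw [Nat.le_div_iff_mul_le (by omega), mul_comm]
    omega
  calc (ZcubeK k n).edist x y ≤ (ZcubeK k n).edist x x' + (ZcubeK k n).edist x' y :=
        SimpleGraph.edist_triangle
    _ ≤ (P.card + (2 ^ Finset.univ.card - 1) : ℕ) + (n - (n - 2 * k) : ℕ) :=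
        add_le_add hxx' (edist_le_of_eq_of_lt _ x' y hx'y)
    _ ≤ _ := by
        rw [Finset.card_univ, Fintype.card_fin]
        norm_cast
        omega

theorem diam_le (k n : ℕ) : (ZcubeK k n).diam ≤ n / (k + 1) + (2 ^ k - 1) + 2 * k :=
  ENat.toNat_le_of_le_natCast (ediam_le_of_edist_le edist_le)

theorem diam_le_self (k n : ℕ) : (ZcubeK k n).diam ≤ n :=
  ENat.toNat_le_of_le_natCast <| ediam_le_of_edist_le fun x y => by
    simpa using edist_le_of_eq_of_lt 0 x y (by simp)

theorem diam_le_real (k n : ℕ) : ((ZcubeK k n).diam : ℝ) ≤ n / (k + 1) + 2 ^ k + 2 * k := by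
  have hdiv : ((n / (k + 1) : ℕ) : ℝ) ≤ n / (k + 1) := by exact_mod_cast Nat.cast_div_le
  have hpow : ((2 ^ k - 1 : ℕ) : ℝ) ≤ 2 ^ k := by exact_mod_cast Nat.sub_le _ _
  calc ((ZcubeK k n).diam : ℝ) ≤ ((n / (k + 1) + (2 ^ k - 1) + 2 * k : ℕ) : ℝ) := by
        exact_mod_cast diam_le k n
    _ ≤ _ := by push_cast; linarith

theorem diam_kappa_le (n : ℕ) (hpos : 0 < logb 2 n - 2 * logb 2 (logb 2 n) - 1) :
    ((ZcubeK (kappa n) n).diam : ℝ) ≤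
      (1 + (2 * logb 2 (logb 2 n) + 1) / (logb 2 n - 2 * logb 2 (logb 2 n) - 1) +
        1 / logb 2 n) * (n / logb 2 n) := by
  have hn : 2 ≤ n := by
    by_contra! h
    interval_cases n <;> norm_num at hpos
  set L := logb 2 (n : ℝ) with hL
  set c := L - 2 * logb 2 L with hc
  have hL1 : 1 ≤ L := by
    rw [← logb_self_eq_one one_lt_two]
    exact logb_le_logb_of_le one_lt_two two_pos (by exact_mod_cast hn)
  have hl0 : 0 ≤ logb 2 L := logb_nonneg one_lt_two hL1
  have hkappa : (kappa n : ℝ) = ⌈c⌉ := by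
    have hceil : 1 < ⌈c⌉ := Int.lt_ceil.mpr (by push_cast; linarith)
    rw [kappa, if_neg (by omega), ← hL, ← hc, max_eq_right (by omega)]
    exact_mod_cast Int.toNat_of_nonneg (by omega)
  have hck : c ≤ kappa n := hkappa ▸ Int.le_ceil c
  have hkc : (kappa n : ℝ) < c + 1 := hkappa ▸ Int.ceil_lt_add_one c
  have hrhs : (1 + (2 * logb 2 L + 1) / (c - 1) + 1 / L) * (n / L) = n / (c - 1) + n / L ^ 2 := by
    have : c - 1 ≠ 0 := by linarith
    have : L ≠ 0 := by linarith
    field_simp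
    ring
  rw [hrhs]
  rcases le_or_gt c 2 with hc2 | hc2
  · calc ((ZcubeK (kappa n) n).diam : ℝ) ≤ n := by exact_mod_cast diam_le_self _ n
      _ ≤ n / (c - 1) := le_div_self (by positivity) (by linarith) (by linarith)
      _ ≤ _ := le_add_of_nonneg_right (by positivity)
  · have hl1 : 1 < logb 2 L := by
      rw [← logb_self_eq_one one_lt_two]
      exact logb_lt_logb one_lt_two two_pos (by linarith)
    exact (diam_le_real _ n).trans <| div_add_two_pow_add_le hc2 hck hkc (by linarith)
      (two_rpow_logb_sub_two_mul_logb (by positivity) (by positivity))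

theorem eventually_diam_kappa_le (ε : ℝ) (hε : 0 < ε) :
    ∀ᶠ n : ℕ in atTop, ((ZcubeK (kappa n) n).diam : ℝ) ≤ (1 + ε) * (n / logb 2 n) := by
  have hL := tendsto_logb_natCast_atTop
  have hu := tendsto_logb_div_self_atTop.comp hL
  have hv : Tendsto (fun n : ℕ => 1 / logb 2 (n : ℝ)) atTop (𝓝 0) :=
    hL.inv_tendsto_atTop.congr fun n => (one_div _).symm
  have hden := (tendsto_const_nhds (x := (1 : ℝ))).sub (hu.const_mul 2) |>.sub hv
  have hratio := ((hu.const_mul 2).add hv).div hden (by norm_num) |>.add hv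
  simp only [mul_zero, add_zero, sub_zero, zero_div] at hden hratio
  filter_upwards [hL.eventually_gt_atTop 0, hden.eventually (lt_mem_nhds one_pos),
    hratio.eventually (gt_mem_nhds hε)] with n hL0 hden0 hr
  simp only [Function.comp_apply, Pi.div_apply] at hden0 hr
  set L := logb 2 (n : ℝ)
  set l := logb 2 L
  have hfactor : L - 2 * l - 1 = L * (1 - 2 * (l / L) - 1 / L) := by field_simp
  have hpos : 0 < L - 2 * l - 1 := hfactor ▸ mul_pos hL0 hden0
  have hquot : (2 * l + 1) / (L - 2 * l - 1) =
      (2 * (l / L) + 1 / L) / (1 - 2 * (l / L) - 1 / L) := by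
    rw [hfactor]
    field_simp
  refine (diam_kappa_le n hpos).trans (mul_le_mul_of_nonneg_right ?_ (by positivity))
  change 1 + (2 * l + 1) / (L - 2 * l - 1) + 1 / L ≤ 1 + ε
  rw [hquot]
  linarith

end ZcubeK

/-- with `k = κ(n)`, the graph `Z*_n = Z_{n,κ(n)}` has diameter at most
`(1 + (2log₂log₂ n + 1)/(log₂ n − 2log₂log₂ n − 1) + 1/log₂ n) · n/log₂ n`, which is
`(1 + o(1)) · n/log₂ n`. -/
theorem zcubeK_star_diam :
    (∀ n : ℕ, 0 < Real.logb 2 n - 2 * Real.logb 2 (Real.logb 2 n) - 1 →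
      ((ZcubeK (kappa n) n).diam : ℝ) ≤
        (1 + (2 * Real.logb 2 (Real.logb 2 n) + 1) /
              (Real.logb 2 n - 2 * Real.logb 2 (Real.logb 2 n) - 1) +
            1 / Real.logb 2 n) * ((n : ℝ) / Real.logb 2 n)) ∧
    (∀ ε : ℝ, 0 < ε → ∀ᶠ n : ℕ in Filter.atTop,
      ((ZcubeK (kappa n) n).diam : ℝ) ≤ (1 + ε) * ((n : ℝ) / Real.logb 2 n)) :=
  ⟨ZcubeK.diam_kappa_le, ZcubeK.eventually_diam_kappa_le⟩
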